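/- Let A be a left brace, X ⊆ A a subset additively generating (A,+) such that r = r_A|_{X×X} is a solution of the Yang–Baxter equation on X, and k: X → X a map. Then k_2 r = r k_1 holds if and only if k_1 r = r k_2 holds, where k_1 = k×id and k_2 = id×k. -/
import Mathlib


/-- A left brace structure on an additive abelian group: a group operation
`circ` (with inverse `inv`, whose identity is 0) satisfying the left brace
compatibility a∘(b+c) = a∘b - a + a∘c. -/
structure LeftBrace (A : Type*) [AddCommGroup A] where
  circ : A → A → A
  inv : A → A
  circ_assoc : ∀ a b c, circ (circ a b) c = circ a (circ b c)
  circ_zero : ∀ a, circ a 0 = a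
  zero_circ : ∀ a, circ 0 a = a
  circ_inv : ∀ a, circ a (inv a) = 0
  inv_circ : ∀ a, circ (inv a) a = 0
  compat : ∀ a b c, circ a (b + c) = circ a b - a + circ a c

namespace LeftBrace

variable {A : Type*} [AddCommGroup A] (B : LeftBrace A)

/-- λ_a(b) = -a + a∘b. -/
def lam (a b : A) : A := -a + B.circ a b

/-- a*b = λ_a(b) - b. -/
def star (a b : A) : A := B.lam a b - b

/-- μ_b(a) = λ_a(b)ʹ ∘ a ∘ b. -/
def mu (b a : A) : A := B.circ (B.inv (B.lam a b)) (B.circ a b)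

/-- A left brace is two-sided if (a+b)∘c = a∘c - c + b∘c. -/
def IsTwoSided : Prop := ∀ a b c : A, B.circ (a + b) c = B.circ a c - c + B.circ b c

/-- The Yang–Baxter map r_A(a,b) = (λ_a(b), μ_b(a)) associated to a left brace. -/
def rmap : A × A → A × A := fun p => (B.lam p.1 p.2, B.mu p.2 p.1)

/-- `r × id` acting on triples. -/
def r1map {X : Type*} (r : X × X → X × X) : X × X × X → X × X × X :=
  fun p => ((r (p.1, p.2.1)).1, (r (p.1, p.2.1)).2, p.2.2)

/-- `id × r` acting on triples. -/
def r2map {X : Type*} (r : X × X → X × X) : X × X × X → X × X × X :=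
  fun p => (p.1, r p.2)

/-- `id × k` on pairs. -/
def k2map {X : Type*} (k : X → X) : X × X → X × X := fun p => (p.1, k p.2)

/-- `k × id` on pairs. -/
def k1map {X : Type*} (k : X → X) : X × X → X × X := fun p => (k p.1, p.2)

end LeftBrace

open LeftBrace

section Aux

variable {A : Type*} [AddCommGroup A] (B : LeftBrace A)

lemma LeftBrace.lam_zero' (a : A) : B.lam 0 a = a := by
  simp [lam, B.zero_circ]

lemma LeftBrace.circ_neg' (a b : A) : B.circ a (-b) = a - (B.circ a b - a) := by
  have h := B.compat a b (-b)
  rw [add_neg_cancel, B.circ_zero] at h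
  rw [eq_sub_iff_add_eq, add_comm]
  exact h.symm

lemma LeftBrace.lam_lam (a b c : A) :
    B.lam a (B.lam b c) = B.lam (B.circ a b) c := by
  unfold lam
  rw [B.compat, B.circ_neg', ← B.circ_assoc]
  abel

lemma LeftBrace.mu_eq_lam (b a : A) :
    B.mu b a = B.lam (B.inv (B.lam a b)) a := by
  have hab : B.circ a b = a + B.lam a b := by unfold lam; abel
  unfold mu
  rw [hab, B.compat, B.inv_circ]
  unfold lam
  abel

lemma LeftBrace.r_inv1 (a b : A) : B.lam (B.lam a b) (B.mu b a) = a := by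
  rw [B.mu_eq_lam, B.lam_lam, B.circ_inv, B.lam_zero']

lemma LeftBrace.r_inv2 (a b : A) : B.mu (B.mu b a) (B.lam a b) = b := by
  rw [B.mu_eq_lam (B.mu b a) (B.lam a b), B.r_inv1, B.lam_lam, B.inv_circ,
    B.lam_zero']

end Aux

/-- Part of Theorem 3.6: for X additively generating A with r_A restricting
to X, the conditions k₂r = rk₁ and k₁r = rk₂ are equivalent. -/
theorem statement13 {A : Type*} [AddCommGroup A] (B : LeftBrace A)
    (X : Set A) (hgen : AddSubgroup.closure X = ⊤)
    (hclosed : ∀ x ∈ X, ∀ y ∈ X, B.lam x y ∈ X ∧ B.mu y x ∈ X)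
    (k : A → A) (hk : ∀ x ∈ X, k x ∈ X) :
    (∀ x ∈ X, ∀ y ∈ X, B.lam x y = B.lam (k x) y ∧ k (B.mu y x) = B.mu y (k x)) ↔
    (∀ x ∈ X, ∀ y ∈ X, k (B.lam x y) = B.lam x (k y) ∧ B.mu (k y) x = B.mu y x) := by
  constructor
  · intro h x hx y hy
    obtain ⟨hu, hv⟩ := hclosed x hx y hy
    obtain ⟨h1, h2⟩ := h (B.lam x y) hu (B.mu y x) hv
    rw [B.r_inv1] at h1
    rw [B.r_inv2] at h2
    set u := B.lam x y with hudef
    set v := B.mu y x with hvdef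
    constructor
    · have : B.lam x (k y) = k u :=
        calc B.lam x (k y)
            = B.lam (B.lam (k u) v) (B.mu v (k u)) := by rw [← h1, ← h2]
          _ = k u := B.r_inv1 (k u) v
      exact this.symm
    · calc B.mu (k y) x
          = B.mu (B.mu v (k u)) (B.lam (k u) v) := by rw [← h1, ← h2]
        _ = v := B.r_inv2 (k u) v
  · intro h x hx y hy
    obtain ⟨hu, hv⟩ := hclosed x hx y hy
    obtain ⟨h1, h2⟩ := h (B.lam x y) hu (B.mu y x) hv
    rw [B.r_inv1] at h1
    rw [B.r_inv2] at h2
    set u := B.lam x y with hudef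
    set v := B.mu y x with hvdef
    constructor
    · have : B.lam (k x) y = u :=
        calc B.lam (k x) y
            = B.lam (B.lam u (k v)) (B.mu (k v) u) := by rw [h1, h2]
          _ = u := B.r_inv1 u (k v)
      exact this.symm
    · have : B.mu y (k x) = k v :=
        calc B.mu y (k x)
            = B.mu (B.mu (k v) u) (B.lam u (k v)) := by rw [h1, h2]
          _ = k v := B.r_inv2 u (k v)
      exact this.symm
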